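/- For μ > 0, x > 0, y > 0, the second partial derivative of the Marcum Q-function with respect to x satisfies ∂²Q_μ(x,y)/∂x² = (c_{μ+1}(x,y) − 1)(Q_{μ+1}(x,y) − Q_μ(x,y)), where c_ν(x,y) = √(y/x) · I_ν(2√(xy))/I_{ν−1}(2√(xy)). -/

import Mathlib

open Real MeasureTheory Set Filter

/-- Modified Bessel function of the first kind `I_ν(z)` (for positive real argument),
defined by its Maclaurin-type series. -/
noncomputable def besselI (ν z : ℝ) : ℝ :=
  ∑' n : ℕ, (z / 2) ^ (ν + 2 * (n : ℝ)) / ((Nat.factorial n : ℝ) * Real.Gamma (ν + (n : ℝ) + 1))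

/-- Generalized Marcum Q-function. -/
noncomputable def marcumQ (μ x y : ℝ) : ℝ :=
  x ^ ((1 - μ) / 2) *
    ∫ t in Set.Ioi y, t ^ ((μ - 1) / 2) * Real.exp (-t - x) * besselI (μ - 1) (2 * Real.sqrt (x * t))

/-- Complementary generalized Marcum P-function. -/
noncomputable def marcumP (μ x y : ℝ) : ℝ :=
  x ^ ((1 - μ) / 2) *
    ∫ t in Set.Ioc (0 : ℝ) y, t ^ ((μ - 1) / 2) * Real.exp (-t - x) * besselI (μ - 1) (2 * Real.sqrt (x * t))

/-- Bessel-function ratio `c_ν(x,y) = √(y/x) I_ν(2√(xy))/I_{ν−1}(2√(xy))`. -/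
noncomputable def besselRatioC (ν x y : ℝ) : ℝ :=
  Real.sqrt (y / x) * besselI ν (2 * Real.sqrt (x * y)) / besselI (ν - 1) (2 * Real.sqrt (x * y))

/-!
Expanding the Bessel function in its power series and integrating termwise writes `Q_μ(x, y)` as
the Poisson mixture `e^{-x} ∑ₙ xⁿ/n! · Γ(μ+n, y)/Γ(μ+n)` of regularized upper incomplete gamma
functions. Differentiating the Poisson weights shifts the index, so `∂ₓQ_μ = Q_{μ+1} - Q_μ`. The
recurrence `Γ(a+1, y) = yᵃ e^{-y} + a Γ(a, y)` turns this difference back into a Bessel series,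
`Q_{μ+1} - Q_μ = e^{-x-y} (y/x)^{μ/2} I_μ(2√(xy))`. Hence
`∂ₓ²Q_μ = (Q_{μ+2} - Q_{μ+1}) - (Q_{μ+1} - Q_μ)`, and the ratio of the two consecutive
differences is exactly `c_{μ+1}(x, y)`.
-/
open scoped Nat Topology

noncomputable def upperIncGamma (a y : ℝ) : ℝ := ∫ t in Ioi y, exp (-t) * t ^ (a - 1)

noncomputable def regUpperIncGamma (a y : ℝ) : ℝ := upperIncGamma a y / Gamma a

section IncompleteGamma

variable {a y : ℝ}

lemma integrableOn_upperIncGamma_integrand (ha : 0 < a) (hy : 0 ≤ y) :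
    IntegrableOn (fun t => exp (-t) * t ^ (a - 1)) (Ioi y) :=
  (GammaIntegral_convergent ha).mono_set (Ioi_subset_Ioi hy)

lemma upperIncGamma_nonneg (hy : 0 ≤ y) : 0 ≤ upperIncGamma a y :=
  setIntegral_nonneg measurableSet_Ioi fun t ht => by
    have : 0 < t := hy.trans_lt ht
    positivity

lemma upperIncGamma_le_Gamma (ha : 0 < a) (hy : 0 ≤ y) : upperIncGamma a y ≤ Gamma a := by
  rw [Gamma_eq_integral ha]
  refine setIntegral_mono_set (GammaIntegral_convergent ha) ?_ (Ioi_subset_Ioi hy).eventuallyLE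
  filter_upwards [ae_restrict_mem measurableSet_Ioi] with t (ht : 0 < t)
  positivity

lemma upperIncGamma_add_one (ha : 0 < a) (hy : 0 ≤ y) :
    upperIncGamma (a + 1) y = y ^ a * exp (-y) + a * upperIncGamma a y := by
  have hint := integrableOn_upperIncGamma_integrand ha hy
  have hint' := integrableOn_upperIncGamma_integrand (by linarith : 0 < a + 1) hy
  simp only [add_sub_cancel_right] at hint'
  -- `-tᵃ e⁻ᵗ` is a primitive of `e⁻ᵗ tᵃ - a e⁻ᵗ tᵃ⁻¹` that vanishes at infinity
  have hparts : ∫ t in Ioi y, (exp (-t) * t ^ a - a * (exp (-t) * t ^ (a - 1))) =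
      0 - -(y ^ a * exp (-y)) := by
    refine integral_Ioi_of_hasDerivAt_of_tendsto (f := fun t => -(t ^ a * exp (-t)))
      ?_ (fun t ht => ?_) (hint'.sub (hint.const_mul a)) ?_
    · exact ((continuousAt_rpow_const y a (Or.inr ha.le)).mul
        (by fun_prop)).neg.continuousWithinAt
    · have ht : t ≠ 0 := (hy.trans_lt ht).ne'
      convert (((hasDerivAt_rpow_const (p := a) (Or.inl ht)).fun_mul
        (hasDerivAt_neg t).exp).fun_neg) using 1
      ring
    · simpa using (tendsto_rpow_mul_exp_neg_mul_atTop_nhds_zero a 1 one_pos).neg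
  rw [integral_sub hint' (hint.const_mul a), integral_const_mul] at hparts
  unfold upperIncGamma
  rw [add_sub_cancel_right]
  linarith

lemma regUpperIncGamma_nonneg (ha : 0 < a) (hy : 0 ≤ y) : 0 ≤ regUpperIncGamma a y :=
  div_nonneg (upperIncGamma_nonneg hy) (Gamma_pos_of_pos ha).le

lemma abs_regUpperIncGamma_le_one (ha : 0 < a) (hy : 0 ≤ y) : |regUpperIncGamma a y| ≤ 1 := by
  rw [abs_of_nonneg (regUpperIncGamma_nonneg ha hy), regUpperIncGamma,
    div_le_one (Gamma_pos_of_pos ha)]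
  exact upperIncGamma_le_Gamma ha hy

lemma regUpperIncGamma_add_one_sub (ha : 0 < a) (hy : 0 ≤ y) :
    regUpperIncGamma (a + 1) y - regUpperIncGamma a y = y ^ a * exp (-y) / Gamma (a + 1) := by
  have hΓ := (Gamma_pos_of_pos ha).ne'
  rw [regUpperIncGamma, regUpperIncGamma, upperIncGamma_add_one ha hy, Gamma_add_one ha.ne']
  field_simp
  ring

lemma integral_Ioi_tsum_mul_upperIncGamma_integrand {w s : ℕ → ℝ} (hw : ∀ n, 0 ≤ w n)
    (hs : ∀ n, 0 < s n) (hy : 0 ≤ y) (hsum : Summable fun n => w n * Gamma (s n)) :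
    ∫ t in Ioi y, ∑' n, w n * (exp (-t) * t ^ (s n - 1)) = ∑' n, w n * upperIncGamma (s n) y := by
  have hint (n : ℕ) := (integrableOn_upperIncGamma_integrand (hs n) hy).const_mul (w n)
  rw [← integral_tsum_of_summable_integral_norm hint]
  · simp_rw [integral_const_mul]
    rfl
  refine .of_nonneg_of_le (fun n => integral_nonneg fun _ => norm_nonneg _) (fun n => ?_) hsum
  calc ∫ t in Ioi y, ‖w n * (exp (-t) * t ^ (s n - 1))‖ = w n * upperIncGamma (s n) y := by
        rw [upperIncGamma, ← integral_const_mul]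
        refine setIntegral_congr_fun measurableSet_Ioi fun t ht => ?_
        have : 0 < t := hy.trans_lt ht
        have := hw n
        rw [norm_of_nonneg (by positivity)]
    _ ≤ w n * Gamma (s n) := mul_le_mul_of_nonneg_left (upperIncGamma_le_Gamma (hs n) hy) (hw n)

end IncompleteGamma

noncomputable def egf (c : ℕ → ℝ) (x : ℝ) : ℝ := ∑' n, c n * x ^ n / n !

section ExpGeneratingFunction

variable {c : ℕ → ℝ} {C : ℝ}

lemma norm_mul_pow_div_factorial_le (hc : ∀ n, |c n| ≤ C) {x R : ℝ} (hx : |x| ≤ R) (n : ℕ) :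
    ‖c n * x ^ n / (n ! : ℝ)‖ ≤ C * (R ^ n / n !) := by
  rw [norm_div, norm_mul, norm_pow, Real.norm_natCast, mul_div_assoc]
  gcongr
  exacts [(abs_nonneg _).trans (hc 0), hc n, hx]

lemma summable_egf (hc : ∀ n, |c n| ≤ C) (x : ℝ) : Summable fun n => c n * x ^ n / n ! :=
  .of_norm_bounded ((summable_pow_div_factorial |x|).mul_left C)
    (norm_mul_pow_div_factorial_le hc le_rfl)

lemma hasDerivAt_egf (hc : ∀ n, |c n| ≤ C) (x : ℝ) :
    HasDerivAt (egf c) (egf (fun n => c (n + 1)) x) x := by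
  -- split off the constant term so that the termwise derivative needs no reindexing
  have hsplit : egf c = fun z => c 0 + ∑' n, c (n + 1) * (z ^ (n + 1) / (n + 1)!) := by
    funext z
    rw [egf, (summable_egf hc z).tsum_eq_zero_add]
    simp [mul_div_assoc]
  have hderiv (n : ℕ) (z : ℝ) :
      HasDerivAt (fun z => c (n + 1) * (z ^ (n + 1) / (n + 1)!)) (c (n + 1) * z ^ n / n !) z := by
    refine (((hasDerivAt_pow (n + 1) z).div_const ((n + 1)! : ℝ)).const_mul
      (c (n + 1))).congr_deriv ?_
    rw [Nat.factorial_succ]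
    push_cast
    field_simp
  rw [hsplit]
  refine (hasDerivAt_tsum_of_isPreconnected (t := Metric.ball x 1)
    ((summable_pow_div_factorial (|x| + 1)).mul_left C) Metric.isOpen_ball
    (convex_ball x 1).isPreconnected (fun n z _ => hderiv n z)
    (fun n z hz => norm_mul_pow_div_factorial_le (fun n => hc (n + 1)) ?_ n)
    (Metric.mem_ball_self one_pos) ?_ (Metric.mem_ball_self one_pos)).const_add (c 0)
  · have := abs_sub_abs_le_abs_sub z x
    rw [Metric.mem_ball, Real.dist_eq] at hz
    linarith
  · simpa only [mul_div_assoc] using (summable_nat_add_iff 1).2 (summable_egf hc x)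

end ExpGeneratingFunction

section BesselSeries

lemma besselI_two_mul_sqrt (ν : ℝ) {w : ℝ} (hw : 0 < w) :
    besselI ν (2 * √w) = w ^ (ν / 2) * ∑' n : ℕ, w ^ n / (n ! * Gamma (ν + n + 1)) := by
  rw [besselI, ← tsum_mul_left]
  refine tsum_congr fun n => ?_
  rw [mul_div_cancel_left₀ _ two_ne_zero, sqrt_eq_rpow, ← rpow_mul hw.le,
    show 1 / 2 * (ν + 2 * n) = ν / 2 + n by ring, rpow_add hw, rpow_natCast]
  ring

variable {ν : ℝ}

lemma Gamma_add_one_le_Gamma_add_nat_add_one (hν : 0 ≤ ν) (n : ℕ) :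
    Gamma (ν + 1) ≤ Gamma (ν + n + 1) := by
  induction n with
  | zero => simp
  | succ n ih =>
    have hΓ : 0 < Gamma (ν + n + 1) := Gamma_pos_of_pos (by positivity)
    calc Gamma (ν + 1) ≤ Gamma (ν + n + 1) := ih
      _ ≤ (ν + n + 1) * Gamma (ν + n + 1) := le_mul_of_one_le_left hΓ.le (by linarith)
      _ = Gamma (ν + (n + 1 : ℕ) + 1) := by
          rw [← Gamma_add_one (by positivity)]; push_cast; ring_nf

lemma summable_besselI_series (hν : 0 ≤ ν) {w : ℝ} (hw : 0 ≤ w) :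
    Summable fun n : ℕ => w ^ n / (n ! * Gamma (ν + n + 1)) := by
  have hΓ : 0 < Gamma (ν + 1) := Gamma_pos_of_pos (by linarith)
  refine .of_nonneg_of_le (fun n => ?_) (fun n => ?_)
    ((summable_pow_div_factorial w).div_const (Gamma (ν + 1)))
  · have := Gamma_pos_of_pos (by positivity : 0 < ν + n + 1)
    positivity
  · rw [div_div]
    gcongr
    exact Gamma_add_one_le_Gamma_add_nat_add_one hν n

lemma besselI_pos (hν : 0 ≤ ν) {z : ℝ} (hz : 0 < z) : 0 < besselI ν z := by
  have hw : 0 < (z / 2) ^ 2 := by positivity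
  have hz' : 2 * √((z / 2) ^ 2) = z := by rw [sqrt_sq (by positivity)]; ring
  rw [← hz', besselI_two_mul_sqrt ν hw]
  refine mul_pos (by positivity) ((summable_besselI_series hν hw.le).tsum_pos (fun n => ?_) 0 ?_)
  · have := Gamma_pos_of_pos (by positivity : 0 < ν + n + 1)
    positivity
  · have := Gamma_pos_of_pos (by positivity : 0 < ν + (0 : ℕ) + 1)
    positivity

end BesselSeries

section MarcumQ

variable {μ x y : ℝ}

lemma marcumQ_integrand_eq (μ : ℝ) (hx : 0 < x) {t : ℝ} (ht : 0 < t) :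
    t ^ ((μ - 1) / 2) * exp (-t - x) * besselI (μ - 1) (2 * √(x * t)) =
      x ^ ((μ - 1) / 2) * exp (-x) *
        ∑' n : ℕ, x ^ n / (n ! * Gamma (μ + n)) * (exp (-t) * t ^ (μ + n - 1)) := by
  rw [besselI_two_mul_sqrt _ (mul_pos hx ht), ← tsum_mul_left, ← tsum_mul_left, ← tsum_mul_left]
  refine tsum_congr fun n => ?_
  have htpow : t ^ (μ + n - 1) = t ^ ((μ - 1) / 2) * t ^ ((μ - 1) / 2) * t ^ n := by
    rw [← rpow_add ht, ← rpow_natCast, ← rpow_add ht]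
    ring_nf
  rw [mul_rpow hx.le ht.le, mul_pow, htpow, sub_eq_add_neg (-t), exp_add,
    show μ - 1 + n + 1 = μ + n by ring]
  ring

lemma marcumQ_eq_exp_mul_egf (hμ : 0 < μ) (hx : 0 < x) (hy : 0 ≤ y) :
    marcumQ μ x y = exp (-x) * egf (fun n => regUpperIncGamma (μ + n) y) x := by
  have hΓ (n : ℕ) : 0 < Gamma (μ + n) := Gamma_pos_of_pos (by positivity)
  have hseries := integral_Ioi_tsum_mul_upperIncGamma_integrand
    (w := fun n : ℕ => x ^ n / (n ! * Gamma (μ + n))) (s := fun n : ℕ => μ + n)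
    (fun n => by have := hΓ n; positivity) (fun n => by positivity) hy
    ((summable_pow_div_factorial x).congr fun n => by have := (hΓ n).ne'; field_simp)
  rw [marcumQ, setIntegral_congr_fun measurableSet_Ioi
    fun t ht => marcumQ_integrand_eq μ hx (hy.trans_lt ht), integral_const_mul, hseries,
    ← mul_assoc, ← mul_assoc, ← rpow_add hx, show (1 - μ) / 2 + (μ - 1) / 2 = 0 by ring,
    rpow_zero, one_mul, egf]
  congr 1
  refine tsum_congr fun n => ?_
  rw [regUpperIncGamma]
  ring

lemma hasDerivAt_marcumQ (hμ : 0 < μ) (hx : 0 < x) (hy : 0 ≤ y) :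
    HasDerivAt (fun x' => marcumQ μ x' y) (marcumQ (μ + 1) x y - marcumQ μ x y) x := by
  have hc (n : ℕ) := abs_regUpperIncGamma_le_one (by positivity : 0 < μ + n) hy
  have hshift : (fun n : ℕ => regUpperIncGamma (μ + ↑(n + 1)) y) =
      fun n : ℕ => regUpperIncGamma (μ + 1 + n) y := by
    funext n
    push_cast
    ring_nf
  have h := (hasDerivAt_neg x).exp.mul (hasDerivAt_egf hc x)
  rw [hshift] at h
  refine (h.congr_of_eventuallyEq ?_).congr_deriv ?_
  · filter_upwards [Ioi_mem_nhds hx] with x' hx'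
    exact marcumQ_eq_exp_mul_egf hμ hx' hy
  · rw [marcumQ_eq_exp_mul_egf (by linarith) hx hy, marcumQ_eq_exp_mul_egf hμ hx hy]
    ring

lemma marcumQ_add_one_sub (hμ : 0 < μ) (hx : 0 < x) (hy : 0 < y) :
    marcumQ (μ + 1) x y - marcumQ μ x y =
      exp (-x - y) * (y / x) ^ (μ / 2) * besselI μ (2 * √(x * y)) := by
  have hc (ν : ℝ) (hν : 0 < ν) (n : ℕ) :=
    abs_regUpperIncGamma_le_one (by positivity : 0 < ν + n) hy.le
  have hpow : (y / x) ^ (μ / 2) * (x * y) ^ (μ / 2) = y ^ μ := by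
    rw [← mul_rpow (by positivity) (by positivity), show y / x * (x * y) = y * y by field_simp,
      mul_rpow hy.le hy.le, ← rpow_add hy, add_halves]
  calc marcumQ (μ + 1) x y - marcumQ μ x y
      = exp (-x) * ∑' n : ℕ,
          (regUpperIncGamma (μ + n + 1) y - regUpperIncGamma (μ + n) y) * x ^ n / n ! := by
        rw [marcumQ_eq_exp_mul_egf (by linarith) hx hy.le, marcumQ_eq_exp_mul_egf hμ hx hy.le,
          ← mul_sub, egf, egf, ← (summable_egf (hc _ (by linarith)) x).tsum_sub
            (summable_egf (hc μ hμ) x)]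
        simp_rw [add_right_comm μ 1, sub_mul, sub_div]
    _ = exp (-x - y) * y ^ μ * ∑' n : ℕ, (x * y) ^ n / (n ! * Gamma (μ + n + 1)) := by
        rw [← tsum_mul_left, ← tsum_mul_left]
        refine tsum_congr fun n => ?_
        rw [regUpperIncGamma_add_one_sub (by positivity) hy.le, rpow_add hy, rpow_natCast,
          mul_pow, sub_eq_add_neg (-x), exp_add]
        ring
    _ = exp (-x - y) * (y / x) ^ (μ / 2) * besselI μ (2 * √(x * y)) := by
        rw [besselI_two_mul_sqrt μ (mul_pos hx hy), ← hpow]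
        ring

lemma marcumQ_add_two_sub (hμ : 0 < μ) (hx : 0 < x) (hy : 0 < y) :
    marcumQ (μ + 1 + 1) x y - marcumQ (μ + 1) x y =
      besselRatioC (μ + 1) x y * (marcumQ (μ + 1) x y - marcumQ μ x y) := by
  have hI := (besselI_pos hμ.le (by positivity : 0 < 2 * √(x * y))).ne'
  have hpow : (y / x) ^ ((μ + 1) / 2) = (y / x) ^ (μ / 2) * √(y / x) := by
    rw [sqrt_eq_rpow, ← rpow_add (by positivity), add_div]
  rw [marcumQ_add_one_sub (by linarith) hx hy, marcumQ_add_one_sub hμ hx hy, besselRatioC,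
    add_sub_cancel_right, hpow]
  field_simp

end MarcumQ

theorem marcumQ_second_deriv_x (μ x y : ℝ) (hμ : 0 < μ) (hx : 0 < x) (hy : 0 < y) :
    deriv (deriv (fun x' => marcumQ μ x' y)) x =
      (besselRatioC (μ + 1) x y - 1) * (marcumQ (μ + 1) x y - marcumQ μ x y) := by
  have hderiv : deriv (fun x' => marcumQ μ x' y) =ᶠ[𝓝 x]
      fun x' => marcumQ (μ + 1) x' y - marcumQ μ x' y := by
    filter_upwards [Ioi_mem_nhds hx] with x' hx'
    exact (hasDerivAt_marcumQ hμ hx' hy.le).deriv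
  rw [hderiv.deriv_eq, ((hasDerivAt_marcumQ (by linarith) hx hy.le).fun_sub
    (hasDerivAt_marcumQ hμ hx hy.le)).deriv, marcumQ_add_two_sub hμ hx hy]
  ring
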